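/- arXiv:2203.15500 — 2 statements merged into one kernel-verified Lean document; each statement's English description precedes it below -/
import Mathlib

section
/- (Proposition 1, submatrix part.) For every subset S ⊆ {1,…,N} and every t ≥ 1, the submatrix [A^u(t)]_S equals (1/μ²)([y_{t+1}]_S([y_t]_S)ᵀ − [y_{t+2}]_S([y_{t−1}]_S)ᵀ), i.e. it is computable from the observed coordinates alone, and it is an unbiased estimator of A_S: E[[A^u(t)]_S] = A_S. -/
/-!
Unrolling the recursion gives `y n = μ • ∑_{s ≤ n} A ^ (n - s) *ᵥ x s`, so each coordinate of
`y n` is a finite linear combination of the i.i.d. standard Gaussians `x s k`, which form an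
orthonormal family in `L²(P)`. Hence
`E[y a (y b)ᵀ] = μ² ∑_{s ≤ min a b} A ^ (a - s) (A ^ (b - s))ᵀ`.
For symmetric `A` both lagged covariances in the estimator are sums of the powers
`A ^ (2t + 1 - 2s)`, and they differ only by the term `s = t` of `E[y (t+1) (y t)ᵀ]`, which is
`μ² A`.
-/

open MeasureTheory ProbabilityTheory Matrix Filter

open Finset

theorem ProbabilityTheory.hasLaw_of_map_eq {Ω 𝓧 : Type*} [MeasurableSpace Ω] [MeasurableSpace 𝓧]
    {P : Measure Ω} {X : Ω → 𝓧} {μ : Measure 𝓧} [IsProbabilityMeasure μ] (h : P.map X = μ) :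
    HasLaw X μ P :=
  ⟨.of_map_ne_zero (h ▸ IsProbabilityMeasure.ne_zero μ), h⟩

section Orthonormal

variable {Ω ι : Type*} [MeasurableSpace Ω] {P : Measure Ω} [DecidableEq ι] {ξ : ι → Ω → ℝ}

theorem integral_sum_mul_sum_of_orthonormal (hξ : ∀ p, MemLp (ξ p) 2 P)
    (horth : ∀ p q, ∫ ω, ξ p ω * ξ q ω ∂P = if p = q then 1 else 0)
    (F G : Finset ι) (c d : ι → ℝ) :
    ∫ ω, (∑ p ∈ F, c p * ξ p ω) * (∑ q ∈ G, d q * ξ q ω) ∂P = ∑ p ∈ F ∩ G, c p * d p := by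
  have hexpand : ∀ ω, (∑ p ∈ F, c p * ξ p ω) * (∑ q ∈ G, d q * ξ q ω)
      = ∑ p ∈ F, ∑ q ∈ G, c p * d q * (ξ p ω * ξ q ω) := fun ω => by
    rw [sum_mul_sum]
    exact sum_congr rfl fun p _ => sum_congr rfl fun q _ => by ring
  have hint : ∀ p q, Integrable (fun ω => c p * d q * (ξ p ω * ξ q ω)) P := fun p q =>
    ((hξ p).integrable_mul (hξ q)).const_mul _
  simp_rw [hexpand]
  rw [integral_finsetSum _ fun p _ => integrable_finsetSum _ fun q _ => hint p q]
  simp_rw [integral_finsetSum _ fun q _ => hint _ q, integral_const_mul, horth, mul_ite, mul_one,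
    mul_zero, sum_ite_eq, sum_ite_mem]

end Orthonormal

section Gaussian

variable {Ω ι : Type*} [MeasurableSpace Ω] {P : Measure Ω} {X : Ω → ℝ}

theorem memLp_two_of_hasLaw_gaussianReal (hX : HasLaw X (gaussianReal 0 1) P) : MemLp X 2 P :=
  (hX.map_eq ▸ memLp_id_gaussianReal 2 : MemLp id 2 (P.map X)).comp_of_map hX.aemeasurable

theorem integral_eq_zero_of_hasLaw_gaussianReal (hX : HasLaw X (gaussianReal 0 1) P) :
    ∫ ω, X ω ∂P = 0 := by
  rw [hX.integral_eq, integral_id_gaussianReal]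

theorem integral_mul_self_of_hasLaw_gaussianReal (hX : HasLaw X (gaussianReal 0 1) P) :
    ∫ ω, X ω * X ω ∂P = 1 := by
  simp_rw [← sq]
  rw [← variance_of_integral_eq_zero hX.aemeasurable (integral_eq_zero_of_hasLaw_gaussianReal hX),
    hX.variance_eq, variance_id_gaussianReal, NNReal.coe_one]

theorem integral_mul_eq_ite_of_iIndepFun_gaussianReal [DecidableEq ι] {ξ : ι → Ω → ℝ}
    (hind : iIndepFun ξ P) (hlaw : ∀ p, HasLaw (ξ p) (gaussianReal 0 1) P) (p q : ι) :
    ∫ ω, ξ p ω * ξ q ω ∂P = if p = q then 1 else 0 := by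
  split_ifs with h
  · subst h; exact integral_mul_self_of_hasLaw_gaussianReal (hlaw p)
  · rw [(hind.indepFun h).integral_fun_mul_eq_mul_integral
      (memLp_two_of_hasLaw_gaussianReal (hlaw p)).aestronglyMeasurable
      (memLp_two_of_hasLaw_gaussianReal (hlaw q)).aestronglyMeasurable,
      integral_eq_zero_of_hasLaw_gaussianReal (hlaw p), zero_mul]

end Gaussian

section LinearRecursion

variable {R n : Type*} [CommRing R] [Fintype n] [DecidableEq n]

theorem eq_smul_sum_pow_mulVec_of_rec {A : Matrix n n R} {c : R} {x y : ℕ → n → R}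
    (h0 : y 0 = c • x 0) (hrec : ∀ t, y (t + 1) = A *ᵥ y t + c • x (t + 1)) (t : ℕ) :
    y t = c • ∑ s ∈ range (t + 1), (A ^ (t - s)) *ᵥ x s := by
  induction t with
  | zero => simp [h0]
  | succ t ih =>
    rw [hrec, ih, mulVec_smul, mulVec_sum, sum_range_succ _ (t + 1), Nat.sub_self, pow_zero,
      one_mulVec, smul_add]
    congr 2
    refine sum_congr rfl fun s hs => ?_
    rw [mulVec_mulVec, ← pow_succ', Nat.sub_add_comm (mem_range_succ_iff.mp hs)]

theorem sum_pow_mul_pow_transpose_sub_sum {A : Matrix n n R} (hA : A.IsSymm) (t : ℕ) :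
    ∑ s ∈ range (t + 1), A ^ (t + 1 - s) * (A ^ (t - s))ᵀ
      - ∑ s ∈ range t, A ^ (t + 2 - s) * (A ^ (t - 1 - s))ᵀ = A := by
  rw [sum_range_succ, Nat.sub_self, pow_zero, transpose_one, mul_one, Nat.add_sub_cancel_left,
    pow_one, add_sub_right_comm, ← sum_sub_distrib, sum_eq_zero, zero_add]
  intro s hs
  have hst : s < t := mem_range.mp hs
  rw [(hA.pow _).eq, (hA.pow _).eq, ← pow_add, ← pow_add, sub_eq_zero]
  congr 1
  omega

end LinearRecursion

section LinearGaussianSystem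

variable {Ω n : Type*} [Fintype n] [DecidableEq n] {A : Matrix n n ℝ} {c : ℝ} {x y : ℕ → Ω → n → ℝ}

theorem apply_eq_sum_of_rec (h0 : ∀ ω, y 0 ω = c • x 0 ω)
    (hrec : ∀ t ω, y (t + 1) ω = A *ᵥ y t ω + c • x (t + 1) ω) (t : ℕ) (ω : Ω) (i : n) :
    y t ω i = c * ∑ p ∈ range (t + 1) ×ˢ univ, (A ^ (t - p.1)) i p.2 * x p.1 ω p.2 := by
  rw [eq_smul_sum_pow_mulVec_of_rec (x := fun s => x s ω) (y := fun s => y s ω) (h0 ω)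
    (fun s => hrec s ω), sum_product]
  simp [mulVec, dotProduct, Finset.sum_apply, mul_sum]

variable [MeasurableSpace Ω] {P : Measure Ω}

theorem memLp_apply_of_rec (hx : ∀ p : ℕ × n, MemLp (fun ω => x p.1 ω p.2) 2 P)
    (h0 : ∀ ω, y 0 ω = c • x 0 ω) (hrec : ∀ t ω, y (t + 1) ω = A *ᵥ y t ω + c • x (t + 1) ω)
    (t : ℕ) (i : n) : MemLp (fun ω => y t ω i) 2 P := by
  simp_rw [apply_eq_sum_of_rec h0 hrec]
  exact (memLp_finsetSum _ fun p _ => (hx p).const_mul _).const_mul c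

theorem integral_apply_mul_apply_of_rec (hx : ∀ p : ℕ × n, MemLp (fun ω => x p.1 ω p.2) 2 P)
    (horth : ∀ p q : ℕ × n, ∫ ω, x p.1 ω p.2 * x q.1 ω q.2 ∂P = if p = q then 1 else 0)
    (h0 : ∀ ω, y 0 ω = c • x 0 ω) (hrec : ∀ t ω, y (t + 1) ω = A *ᵥ y t ω + c • x (t + 1) ω)
    (a b : ℕ) (i j : n) :
    ∫ ω, y a ω i * y b ω j ∂P
      = c ^ 2 * (∑ s ∈ range (min a b + 1), A ^ (a - s) * (A ^ (b - s))ᵀ) i j := by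
  simp_rw [apply_eq_sum_of_rec h0 hrec, mul_mul_mul_comm c, ← sq]
  rw [integral_const_mul, integral_sum_mul_sum_of_orthonormal hx horth, product_inter_product,
    range_inter_range, Nat.add_min_add_right, inter_self, sum_product]
  simp only [Matrix.sum_apply, mul_apply, transpose_apply]

end LinearGaussianSystem

theorem estimator_unbiased_submatrix_general
    {Ω : Type*} [MeasurableSpace Ω] (P : Measure Ω)
    (N : ℕ) (μ : ℝ) (hμ : μ ∈ Set.Ioo (0 : ℝ) 1)
    (A : Matrix (Fin N) (Fin N) ℝ) (hA : A.IsSymm)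
    (x : ℕ → Ω → Fin N → ℝ)
    (hxindep : iIndepFun
      (fun (p : ℕ × Fin N) ω => x p.1 ω p.2) P)
    (hxgauss : ∀ t k, P.map (fun ω => x t ω k) = gaussianReal 0 1)
    (y : ℕ → Ω → Fin N → ℝ)
    (hy0 : ∀ ω, y 0 ω = μ • x 0 ω)
    (hyrec : ∀ t ω, y (t + 1) ω = A.mulVec (y t ω) + μ • x (t + 1) ω)
    (t : ℕ) (ht : 1 ≤ t)
    (Au : Ω → Matrix (Fin N) (Fin N) ℝ)
    (hAu : ∀ ω, Au ω = (μ ^ 2)⁻¹ •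
      (Matrix.vecMulVec (y (t + 1) ω) (y t ω) - Matrix.vecMulVec (y (t + 2) ω) (y (t - 1) ω)))
    (S : Finset (Fin N)) :
    (∀ ω, (Au ω).submatrix (fun i : {a // a ∈ S} => i.1) (fun j : {a // a ∈ S} => j.1)
        = Matrix.of fun (i : {a // a ∈ S}) (j : {a // a ∈ S}) =>
            (μ ^ 2)⁻¹ * (y (t + 1) ω i.1 * y t ω j.1 - y (t + 2) ω i.1 * y (t - 1) ω j.1)) ∧
      (Matrix.of fun (i : {a // a ∈ S}) (j : {a // a ∈ S}) => ∫ ω, Au ω i.1 j.1 ∂P)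
        = A.submatrix (fun i : {a // a ∈ S} => i.1) (fun j : {a // a ∈ S} => j.1) := by
  have hAu_apply : ∀ ω i j, Au ω i j
      = (μ ^ 2)⁻¹ * (y (t + 1) ω i * y t ω j - y (t + 2) ω i * y (t - 1) ω j) := fun ω i j => by
    simp only [hAu, Matrix.smul_apply, Matrix.sub_apply, vecMulVec_apply, smul_eq_mul]
  refine ⟨fun ω => ext fun i j => hAu_apply ω i j, ext fun i j => ?_⟩
  have hlaw (p : ℕ × Fin N) : HasLaw (fun ω => x p.1 ω p.2) (gaussianReal 0 1) P :=
    hasLaw_of_map_eq (hxgauss p.1 p.2)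
  have hx (p : ℕ × Fin N) := memLp_two_of_hasLaw_gaussianReal (hlaw p)
  have horth := integral_mul_eq_ite_of_iIndepFun_gaussianReal hxindep hlaw
  have hint a b : Integrable (fun ω => y a ω i * y b ω j) P :=
    (memLp_apply_of_rec hx hy0 hyrec a i).integrable_mul (memLp_apply_of_rec hx hy0 hyrec b j)
  have hmoment := integral_apply_mul_apply_of_rec hx horth hy0 hyrec (i := i.1) (j := j.1)
  simp only [of_apply, submatrix_apply, hAu_apply]
  rw [integral_const_mul, integral_sub (hint _ _) (hint _ _), hmoment, hmoment,
    min_eq_right (by omega), min_eq_right (by omega), Nat.sub_add_cancel ht, ← mul_sub,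
    ← Matrix.sub_apply, sum_pow_mul_pow_transpose_sub_sum hA,
    inv_mul_cancel_left₀ (pow_ne_zero 2 hμ.1.ne')]

/-- Proposition 1 (submatrix part): for every subset `S` of the nodes and every `t ≥ 1`,
the submatrix `[Aᵘ(t)]_S` of the estimator `Aᵘ(t) = (1/μ²)(y_{t+1} yₜᵀ − y_{t+2} y_{t−1}ᵀ)`
equals `(1/μ²)([y_{t+1}]_S([yₜ]_S)ᵀ − [y_{t+2}]_S([y_{t−1}]_S)ᵀ)`, i.e. it is computable
from the observed coordinates alone, and it is an unbiased estimator of `A_S`: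
`E[[Aᵘ(t)]_S] = A_S`. -/
theorem estimator_unbiased_submatrix
    {Ω : Type*} [MeasurableSpace Ω] (P : Measure Ω) [IsProbabilityMeasure P]
    (N : ℕ) (hN : 1 ≤ N) (μ : ℝ) (hμ : μ ∈ Set.Ioo (0 : ℝ) 1)
    (A : Matrix (Fin N) (Fin N) ℝ) (hA : A.IsSymm)
    (x : ℕ → Ω → Fin N → ℝ)
    (hxmeas : ∀ t k, Measurable (fun ω => x t ω k))
    (hxindep : iIndepFun
      (fun (p : ℕ × Fin N) ω => x p.1 ω p.2) P)
    (hxgauss : ∀ t k, P.map (fun ω => x t ω k) = gaussianReal 0 1)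
    (y : ℕ → Ω → Fin N → ℝ)
    (hy0 : ∀ ω, y 0 ω = μ • x 0 ω)
    (hyrec : ∀ t ω, y (t + 1) ω = A.mulVec (y t ω) + μ • x (t + 1) ω)
    (t : ℕ) (ht : 1 ≤ t)
    (Au : Ω → Matrix (Fin N) (Fin N) ℝ)
    (hAu : ∀ ω, Au ω = (μ ^ 2)⁻¹ •
      (Matrix.vecMulVec (y (t + 1) ω) (y t ω) - Matrix.vecMulVec (y (t + 2) ω) (y (t - 1) ω)))
    (S : Finset (Fin N)) :
    (∀ ω, (Au ω).submatrix (fun i : {a // a ∈ S} => i.1) (fun j : {a // a ∈ S} => j.1)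
        = Matrix.of fun (i : {a // a ∈ S}) (j : {a // a ∈ S}) =>
            (μ ^ 2)⁻¹ * (y (t + 1) ω i.1 * y t ω j.1 - y (t + 2) ω i.1 * y (t - 1) ω j.1)) ∧
      (Matrix.of fun (i : {a // a ∈ S}) (j : {a // a ∈ S}) => ∫ ω, Au ω i.1 j.1 ∂P)
        = A.submatrix (fun i : {a // a ∈ S} => i.1) (fun j : {a // a ∈ S} => j.1) :=
  estimator_unbiased_submatrix_general P N μ hμ A hA x hxindep hxgauss y hy0 hyrec t ht Au hAu S
end

section
/- For all times j > t ≥ 0 and all indices a, b, c, d in {1,…,N}: Cov((y_j y_jᵀ)_{ab}, (y_t y_tᵀ)_{cd}) = Σ_{p,q=1}^N (A^{j−t})_{ap} (A^{j−t})_{bq} [ R_0(t)_{pc} R_0(t)_{qd} + R_0(t)_{pd} R_0(t)_{qc} ], where R_0(t) := E[y_t y_tᵀ]; in Kronecker-product form, Cov(vec(y_j y_jᵀ), vec(y_t y_tᵀ)) = 2 (A^{j−t} ⊗ A^{j−t})(R_0(t) ⊗ R_0(t)) after symmetrization. -/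
open MeasureTheory ProbabilityTheory Matrix

/-!
Unrolling the recursion writes `y_u = D_u X` as a linear image of the single standard Gaussian
vector `X = (x_s(l))_{s ≤ j, l}`, and the impulse responses satisfy `D_j D_tᵀ = A^{j-t} D_t D_tᵀ`
because the noise entering after time `t` does not reach `y_t`. Isserlis' theorem for linear forms
of `X`, `E[(u⬝X)(v⬝X)(w⬝X)(z⬝X)] = (u⬝v)(w⬝z) + (u⬝w)(v⬝z) + (u⬝z)(v⬝w)`, then turns the
covariance into `(D_j D_tᵀ)_{ac} (D_j D_tᵀ)_{bd} + (D_j D_tᵀ)_{ad} (D_j D_tᵀ)_{bc}` with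
`R₀(t) = D_t D_tᵀ`. The Gaussian moments `0, 1, 0, 3` behind Isserlis' theorem are read off the
derivatives at `0` of the moment generating function `exp (t² / 2)`.
-/

open scoped NNReal ENNReal

section GaussianMoments

open Polynomial

noncomputable def expHalfSqDerivPoly : ℕ → ℝ[X]
  | 0 => 1
  | n + 1 => derivative (expHalfSqDerivPoly n) + X * expHalfSqDerivPoly n

lemma iteratedDeriv_exp_half_sq (n : ℕ) :
    iteratedDeriv n (fun t : ℝ ↦ Real.exp (t ^ 2 / 2)) =
      fun t ↦ (expHalfSqDerivPoly n).eval t * Real.exp (t ^ 2 / 2) := by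
  induction n with
  | zero => simp [expHalfSqDerivPoly]
  | succ n ih =>
    rw [iteratedDeriv_succ, ih]
    funext t
    have h : HasDerivAt (fun t : ℝ ↦ t ^ 2 / 2) t t := by
      simpa using (hasDerivAt_pow 2 t).div_const 2
    rw [(((expHalfSqDerivPoly n).hasDerivAt t).fun_mul h.exp).deriv]
    simp only [expHalfSqDerivPoly, eval_add, eval_mul, eval_X]
    ring

lemma integral_pow_gaussianReal_zero_one (n : ℕ) :
    ∫ x, x ^ n ∂gaussianReal 0 1 = (expHalfSqDerivPoly n).eval 0 := by
  have h := iteratedDeriv_mgf_zero (X := id) (μ := gaussianReal 0 1)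
    (by simp [integrableExpSet_id_gaussianReal]) n
  simp only [mgf_id_gaussianReal, zero_mul, zero_add, NNReal.coe_one, one_mul,
    iteratedDeriv_exp_half_sq] at h
  simpa using h.symm

end GaussianMoments

lemma dotProduct_mul_dotProduct {R ι : Type*} [CommSemiring R] [Fintype ι] (u v x : ι → R) :
    (u ⬝ᵥ x) * (v ⬝ᵥ x) = ∑ q : ι × ι, u q.1 * v q.2 * (x q.1 * x q.2) := by
  rw [dotProduct, dotProduct, Fintype.sum_mul_sum, Fintype.sum_prod_type]
  exact Finset.sum_congr rfl fun i _ ↦ Finset.sum_congr rfl fun j _ ↦ by ring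

structure IsIIDStandardGaussian {Ω ι : Type*} [MeasurableSpace Ω] (g : ι → Ω → ℝ)
    (P : Measure Ω) : Prop where
  measurable : ∀ i, Measurable (g i)
  iIndepFun : iIndepFun g P
  map_eq : ∀ i, P.map (g i) = gaussianReal 0 1

namespace IsIIDStandardGaussian

variable {Ω ι : Type*} [MeasurableSpace Ω] {P : Measure Ω} {g : ι → Ω → ℝ}
  (hg : IsIIDStandardGaussian g P)
include hg

lemma memLp (i : ι) (p : ℝ≥0) : MemLp (g i) p P := by
  have h := memLp_id_gaussianReal (μ := 0) (v := 1) p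
  rwa [← hg.map_eq i, memLp_map_measure_iff aestronglyMeasurable_id
    (hg.measurable i).aemeasurable] at h

lemma integrable_prod {n : ℕ} (idx : Fin n → ι) :
    Integrable (fun ω ↦ ∏ r, g (idx r) ω) P := by
  have := hg.iIndepFun.isProbabilityMeasure
  obtain rfl | hn := eq_or_ne n 0
  · simp
  · have h := MemLp.prod' (s := Finset.univ) (p := fun _ ↦ (n : ℝ≥0∞))
      fun r _ ↦ hg.memLp (idx r) n
    rwa [Finset.sum_const, Finset.card_univ, Fintype.card_fin, nsmul_eq_mul,
      ENNReal.mul_inv_cancel (by simpa using hn) (by simp), inv_one,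
      memLp_one_iff_integrable] at h

variable [Fintype ι] [DecidableEq ι]

lemma integral_multiset_prod (s : Multiset ι) :
    ∫ ω, (s.map (g · ω)).prod ∂P =
      ∏ m ∈ s.toFinset, ∫ x, x ^ s.count m ∂gaussianReal 0 1 := by
  have hcount : ∀ m ∉ s.toFinset, s.count m = 0 := fun m hm ↦ by simpa using hm
  calc ∫ ω, (s.map (g · ω)).prod ∂P = ∫ ω, ∏ m, g m ω ^ s.count m ∂P := by
        congr with ω
        rw [Finset.prod_multiset_map_count]
        exact Finset.prod_subset (Finset.subset_univ _) fun m _ hm ↦ by simp [hcount m hm]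
    _ = ∏ m, ∫ ω, g m ω ^ s.count m ∂P :=
        hg.iIndepFun.integral_fun_prod_comp (f := fun m x ↦ x ^ s.count m)
          (fun m ↦ (hg.measurable m).aemeasurable) fun m ↦ by fun_prop
    _ = ∏ m, ∫ x, x ^ s.count m ∂gaussianReal 0 1 := by
        congr with m
        rw [← hg.map_eq m, integral_map (hg.measurable m).aemeasurable (by fun_prop)]
    _ = ∏ m ∈ s.toFinset, ∫ x, x ^ s.count m ∂gaussianReal 0 1 :=
        (Finset.prod_subset (Finset.subset_univ _) fun m _ hm ↦ by simp [hcount m hm]).symm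

lemma integral_mul (i j : ι) :
    ∫ ω, g i ω * g j ω ∂P = if i = j then 1 else 0 := by
  have h : (fun ω ↦ g i ω * g j ω) = fun ω ↦ (({i, j} : Multiset ι).map (g · ω)).prod := by
    simp
  rw [h, hg.integral_multiset_prod]
  by_cases i = j <;> simp_all [integral_pow_gaussianReal_zero_one, expHalfSqDerivPoly]

lemma integral_mul_mul_mul (i j k l : ι) :
    ∫ ω, g i ω * g j ω * g k ω * g l ω ∂P =
      (if i = j then 1 else 0) * (if k = l then 1 else 0) +
      (if i = k then 1 else 0) * (if j = l then 1 else 0) +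
      (if i = l then 1 else 0) * (if j = k then 1 else 0) := by
  have h : (fun ω ↦ g i ω * g j ω * g k ω * g l ω) =
      fun ω ↦ (({i, j, k, l} : Multiset ι).map (g · ω)).prod := by
    simp [mul_assoc]
  rw [h, hg.integral_multiset_prod]
  -- each equality pattern of the indices gives a product of the moments `0, 1, 0, 3`
  by_cases i = j <;> by_cases i = k <;> by_cases i = l <;> by_cases j = k <;> by_cases j = l <;>
    by_cases k = l <;>
    simp_all [integral_pow_gaussianReal_zero_one, expHalfSqDerivPoly, Multiset.count_cons,
      Multiset.count_singleton, eq_comm]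

lemma integral_dotProduct_mul (u v : ι → ℝ) :
    ∫ ω, (u ⬝ᵥ (g · ω)) * (v ⬝ᵥ (g · ω)) ∂P = u ⬝ᵥ v := by
  have hint (q : ι × ι) : Integrable (fun ω ↦ u q.1 * v q.2 * (g q.1 ω * g q.2 ω)) P :=
    (by simpa using hg.integrable_prod ![q.1, q.2] : Integrable _ P).const_mul _
  simp only [dotProduct_mul_dotProduct]
  rw [integral_finsetSum _ fun q _ ↦ hint q]
  simp [integral_const_mul, hg.integral_mul, dotProduct, Fintype.sum_prod_type]

lemma integral_dotProduct_mul_mul_mul (u v w z : ι → ℝ) :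
    ∫ ω, (u ⬝ᵥ (g · ω)) * (v ⬝ᵥ (g · ω)) * ((w ⬝ᵥ (g · ω)) * (z ⬝ᵥ (g · ω))) ∂P =
      (u ⬝ᵥ v) * (w ⬝ᵥ z) + (u ⬝ᵥ w) * (v ⬝ᵥ z) + (u ⬝ᵥ z) * (v ⬝ᵥ w) := by
  have hint (q : (ι × ι) × (ι × ι)) : Integrable (fun ω ↦ u q.1.1 * v q.1.2 * w q.2.1 * z q.2.2 *
      (g q.1.1 ω * g q.1.2 ω * g q.2.1 ω * g q.2.2 ω)) P :=
    (by simpa [Fin.prod_univ_four] using hg.integrable_prod ![q.1.1, q.1.2, q.2.1, q.2.2] :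
      Integrable _ P).const_mul _
  simp only [dotProduct_mul_dotProduct, Fintype.sum_mul_sum, ← Fintype.sum_prod_type']
  calc _ = ∫ ω, ∑ q : (ι × ι) × (ι × ι), u q.1.1 * v q.1.2 * w q.2.1 * z q.2.2 *
          (g q.1.1 ω * g q.1.2 ω * g q.2.1 ω * g q.2.2 ω) ∂P := by
        congr with ω
        exact Finset.sum_congr rfl fun q _ ↦ by ring
    _ = _ := by
        rw [integral_finsetSum _ fun q _ ↦ hint q]
        simp only [integral_const_mul, hg.integral_mul_mul_mul]
        simp [dotProduct, Fintype.sum_prod_type, mul_add, Finset.sum_add_distrib,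
          Finset.sum_mul_sum, mul_comm, mul_left_comm]

end IsIIDStandardGaussian

section LinearRecursion

open Finset

variable {R n : Type*} [Semiring R] [Fintype n] [DecidableEq n] (A : Matrix n n R)

lemma eq_sum_pow_mulVec_of_eq_mulVec_add {v y : ℕ → n → R} (h0 : y 0 = v 0)
    (hsucc : ∀ t, y (t + 1) = A *ᵥ y t + v (t + 1)) (t : ℕ) :
    y t = ∑ s ∈ range (t + 1), (A ^ (t - s)) *ᵥ v s := by
  induction t with
  | zero => simp [h0]
  | succ t ih =>
    rw [hsucc, ih, mulVec_sum, sum_range_succ _ (t + 1), Nat.sub_self, pow_zero, one_mulVec]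
    congr 1
    refine sum_congr rfl fun s hs ↦ ?_
    rw [mulVec_mulVec, ← pow_succ', Nat.sub_add_comm (mem_range_succ_iff.mp hs)]

def stackedResponse (T u : ℕ) : Matrix n (Fin (T + 1) × n) R :=
  Matrix.of fun k q ↦ if (q.1 : ℕ) ≤ u then (A ^ (u - q.1)) k q.2 else 0

lemma sum_pow_mulVec_eq_stackedResponse_mulVec {T u : ℕ} (hu : u ≤ T) (v : ℕ → n → R) :
    ∑ s ∈ range (u + 1), (A ^ (u - s)) *ᵥ v s =
      stackedResponse A T u *ᵥ fun q ↦ v q.1 q.2 := by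
  ext k
  simp only [Finset.sum_apply, mulVec, dotProduct, Fintype.sum_prod_type, stackedResponse,
    of_apply, ite_mul, zero_mul, sum_ite_irrel, sum_const_zero]
  rw [Fin.sum_univ_eq_sum_range (fun s ↦ if s ≤ u then ∑ l, (A ^ (u - s)) k l * v s l else 0),
    ← sum_filter]
  congr 1
  ext s
  simp
  omega

lemma stackedResponse_apply_eq_pow_mul {T t u : ℕ} (htu : t ≤ u) (k : n)
    {q : Fin (T + 1) × n} (hq : (q.1 : ℕ) ≤ t) :
    stackedResponse A T u k q = (A ^ (u - t) * stackedResponse A T t) k q := by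
  have hpow : A ^ (u - q.1) = A ^ (u - t) * A ^ (t - q.1) := by
    rw [← pow_add]
    congr 1
    omega
  simp [stackedResponse, mul_apply, hq, hq.trans htu, hpow]

lemma stackedResponse_mul_transpose {T t u : ℕ} (htu : t ≤ u) :
    stackedResponse A T u * (stackedResponse A T t)ᵀ =
      A ^ (u - t) * (stackedResponse A T t * (stackedResponse A T t)ᵀ) := by
  rw [← Matrix.mul_assoc]
  ext k l
  simp only [mul_apply]
  refine sum_congr rfl fun q _ ↦ ?_
  by_cases hq : (q.1 : ℕ) ≤ t
  · rw [stackedResponse_apply_eq_pow_mul A htu k hq, mul_apply]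
  · simp [stackedResponse, hq]

end LinearRecursion

theorem covariance_state_outer_products_general
    {Ω : Type*} [MeasurableSpace Ω] (P : Measure Ω)
    (N : ℕ) (μ : ℝ)
    (A : Matrix (Fin N) (Fin N) ℝ)
    (x : ℕ → Ω → Fin N → ℝ)
    (hxmeas : ∀ t k, Measurable (fun ω => x t ω k))
    (hxindep : iIndepFun
      (fun (p : ℕ × Fin N) ω => x p.1 ω p.2) P)
    (hxgauss : ∀ t k, P.map (fun ω => x t ω k) = gaussianReal 0 1)
    (y : ℕ → Ω → Fin N → ℝ)
    (hy0 : ∀ ω, y 0 ω = μ • x 0 ω)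
    (hyrec : ∀ t ω, y (t + 1) ω = A.mulVec (y t ω) + μ • x (t + 1) ω)
    (t j : ℕ) (hjt : t < j) (a b c d : Fin N) :
    (∫ ω, (y j ω a * y j ω b) * (y t ω c * y t ω d) ∂P)
        - (∫ ω, y j ω a * y j ω b ∂P) * (∫ ω, y t ω c * y t ω d ∂P)
      = ∑ p : Fin N, ∑ q : Fin N,
          (A ^ (j - t)) a p * (A ^ (j - t)) b q *
            ((∫ ω, y t ω p * y t ω c ∂P) * (∫ ω, y t ω q * y t ω d ∂P)
              + (∫ ω, y t ω p * y t ω d ∂P) * (∫ ω, y t ω q * y t ω c ∂P)) := by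
  set D : ℕ → Matrix (Fin N) (Fin (j + 1) × Fin N) ℝ := fun u ↦ μ • stackedResponse A j u
  have hX : IsIIDStandardGaussian (fun q : Fin (j + 1) × Fin N ↦ fun ω ↦ x q.1 ω q.2) P :=
    ⟨fun q ↦ hxmeas _ _, hxindep.precomp (Fin.val_injective.prodMap Function.injective_id),
      fun q ↦ hxgauss _ _⟩
  have hy (u : ℕ) (hu : u ≤ j) (ω : Ω) (k : Fin N) :
      y u ω k = D u k ⬝ᵥ fun q ↦ x q.1 ω q.2 := by
    rw [eq_sum_pow_mulVec_of_eq_mulVec_add A (v := fun s ↦ μ • x s ω) (y := (y · ω)) (hy0 ω)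
      (hyrec · ω), sum_pow_mulVec_eq_stackedResponse_mulVec A hu]
    simp [D, mulVec, dotProduct, mul_assoc, mul_left_comm]
  have hcov : D j * (D t)ᵀ = A ^ (j - t) * (D t * (D t)ᵀ) := by
    simp only [D, transpose_smul, Matrix.smul_mul, Matrix.mul_smul,
      stackedResponse_mul_transpose A hjt.le]
  have hcross (k l : Fin N) : D j k ⬝ᵥ D t l = ∑ p, (A ^ (j - t)) k p * (D t p ⬝ᵥ D t l) :=
    congrFun (congrFun hcov k) l
  simp only [hy j le_rfl, hy t hjt.le, hX.integral_dotProduct_mul_mul_mul,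
    hX.integral_dotProduct_mul, hcross, Finset.sum_mul_sum]
  rw [add_assoc, add_sub_cancel_left, ← Finset.sum_add_distrib]
  exact Finset.sum_congr rfl fun p _ ↦ by
    rw [← Finset.sum_add_distrib]
    exact Finset.sum_congr rfl fun q _ ↦ by ring

/-- For all times `j > t ≥ 0` and all indices `a, b, c, d`:
`Cov((y_j y_jᵀ)_{ab}, (y_t y_tᵀ)_{cd})
  = ∑_{p,q} (A^{j−t})_{ap} (A^{j−t})_{bq} (R₀(t)_{pc} R₀(t)_{qd} + R₀(t)_{pd} R₀(t)_{qc})`,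
where `R₀(t) = E[yₜ yₜᵀ]`. -/
theorem covariance_state_outer_products
    {Ω : Type*} [MeasurableSpace Ω] (P : Measure Ω) [IsProbabilityMeasure P]
    (N : ℕ) (hN : 1 ≤ N) (μ : ℝ) (hμ : μ ∈ Set.Ioo (0 : ℝ) 1)
    (A : Matrix (Fin N) (Fin N) ℝ) (hA : A.IsSymm)
    (x : ℕ → Ω → Fin N → ℝ)
    (hxmeas : ∀ t k, Measurable (fun ω => x t ω k))
    (hxindep : iIndepFun
      (fun (p : ℕ × Fin N) ω => x p.1 ω p.2) P)
    (hxgauss : ∀ t k, P.map (fun ω => x t ω k) = gaussianReal 0 1)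
    (y : ℕ → Ω → Fin N → ℝ)
    (hy0 : ∀ ω, y 0 ω = μ • x 0 ω)
    (hyrec : ∀ t ω, y (t + 1) ω = A.mulVec (y t ω) + μ • x (t + 1) ω)
    (t j : ℕ) (hjt : t < j) (a b c d : Fin N) :
    (∫ ω, (y j ω a * y j ω b) * (y t ω c * y t ω d) ∂P)
        - (∫ ω, y j ω a * y j ω b ∂P) * (∫ ω, y t ω c * y t ω d ∂P)
      = ∑ p : Fin N, ∑ q : Fin N,
          (A ^ (j - t)) a p * (A ^ (j - t)) b q *
            ((∫ ω, y t ω p * y t ω c ∂P) * (∫ ω, y t ω q * y t ω d ∂P)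
              + (∫ ω, y t ω p * y t ω d ∂P) * (∫ ω, y t ω q * y t ω c ∂P)) :=
  covariance_state_outer_products_general P N μ A x hxmeas hxindep hxgauss y hy0 hyrec t j hjt a b c
    d
end
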